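/- (Remark 3.2, case d=3; convergence of the high-energy expansion.) There exists κ₀ > 0 such that for all κ ≥ κ₀ the matrix A(κ) is invertible and for all k, ℓ ∈ ℝ³ with |k| = |ℓ| = κ the series Σ_{m=0}^∞ (−4πi)^m C_m(k,ℓ) κ^{−m−1} converges absolutely with f(k,ℓ) = −(i/(2π²)) Σ_{m=0}^∞ (−4πi)^m C_m(k,ℓ) κ^{−m−1}. -/

import Mathlib

open Complex Finset Matrix

noncomputable section

/-- The matrix `A(κ)` for a three-dimensional multipoint potential:
`A(κ)_{jj} = α_j - iκ/(4π)`,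
`A(κ)_{jj'} = -e^{iκ‖y_j - y_{j'}‖}/(4π‖y_j - y_{j'}‖)` for `j ≠ j'`. -/
def A3 (n : ℕ) (y : Fin n → EuclideanSpace ℝ (Fin 3)) (α : Fin n → ℂ) (κ : ℝ) :
    Matrix (Fin n) (Fin n) ℂ :=
  fun j j' =>
    if j = j' then α j - Complex.I * κ / (4 * Real.pi)
    else -Complex.exp (Complex.I * κ * ‖y j - y j'‖) / (4 * Real.pi * ‖y j - y j'‖)

/-- `q(k) = A(κ)⁻¹ b(k)` with `b(k)_j = -e^{i k·y_j}`. -/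
def q3 (n : ℕ) (y : Fin n → EuclideanSpace ℝ (Fin 3)) (α : Fin n → ℂ) (κ : ℝ)
    (k : EuclideanSpace ℝ (Fin 3)) : Fin n → ℂ :=
  (A3 n y α κ)⁻¹ *ᵥ fun j => -Complex.exp (Complex.I * (inner ℝ k (y j) : ℝ))

/-- The scattering amplitude `f(k,ℓ) = (2π)⁻³ Σ_j q_j(k) e^{-iℓ·y_j}`. -/
def f3 (n : ℕ) (y : Fin n → EuclideanSpace ℝ (Fin 3)) (α : Fin n → ℂ) (κ : ℝ)
    (k ℓ : EuclideanSpace ℝ (Fin 3)) : ℂ :=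
  ((2 * Real.pi : ℂ) ^ 3)⁻¹ *
    ∑ j, q3 n y α κ k j * Complex.exp (-Complex.I * (inner ℝ ℓ (y j) : ℝ))

/-- The matrix `W(κ)`: `W(κ)_{jj} = α_j`,
`W(κ)_{jj'} = -e^{iκ‖y_j - y_{j'}‖}/(4π‖y_j - y_{j'}‖)` for `j ≠ j'`. -/
def W3 (n : ℕ) (y : Fin n → EuclideanSpace ℝ (Fin 3)) (α : Fin n → ℂ) (κ : ℝ) :
    Matrix (Fin n) (Fin n) ℂ :=
  fun j j' =>
    if j = j' then α j
    else -Complex.exp (Complex.I * κ * ‖y j - y j'‖) / (4 * Real.pi * ‖y j - y j'‖)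

/-- The coefficients `C_m(k,ℓ) = Σ_{j,j'} [W(κ)^m]_{jj'} e^{i(k·y_{j'} - ℓ·y_j)}`. -/
def C3coef (n : ℕ) (y : Fin n → EuclideanSpace ℝ (Fin 3)) (α : Fin n → ℂ) (κ : ℝ)
    (m : ℕ) (k ℓ : EuclideanSpace ℝ (Fin 3)) : ℂ :=
  ∑ j, ∑ j', (W3 n y α κ ^ m) j j' *
    Complex.exp (Complex.I * ((inner ℝ k (y j') : ℝ) - (inner ℝ ℓ (y j) : ℝ)))

/-! Writing `σ = iκ/(4π)`, we have `A(κ) = W(κ) - σ • 1 = -σ • (1 - σ⁻¹ • W(κ))`. The entries of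
`W(κ)` have moduli independent of `κ`, so `‖σ⁻¹ • W(κ)‖ = (4π/κ) ‖W(0)‖ < 1` for large `κ`, and
`A(κ)⁻¹ = -σ⁻¹ • ∑ₘ (σ⁻¹ • W(κ))ᵐ` is a Neumann series. Pairing it with the plane waves `e^{ik·y}` and
`e^{-iℓ·y}` turns its `m`-th term into a multiple of `C_m(k,ℓ)`, and `σ⁻¹ = -4πi/κ` produces the
coefficients of the expansion. -/

-- The ℓ∞ operator norm is submultiplicative and depends only on the moduli of the entries.
attribute [local instance] Matrix.linftyOpSeminormedAddCommGroup Matrix.linftyOpNormedRing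
  Matrix.linftyOpNormedAlgebra

theorem summable_norm_map_pow_of_norm_lt_one {𝕜 R F : Type*} [NontriviallyNormedField 𝕜]
    [NormedRing R] [NormedSpace 𝕜 R] [HasSummableGeomSeries R] [SeminormedAddCommGroup F]
    [NormedSpace 𝕜 F] (L : R →L[𝕜] F) {s : R} (hs : ‖s‖ < 1) :
    Summable fun m => ‖L (s ^ m)‖ :=
  ((summable_norm_geometric_of_norm_lt_one hs).mul_left ‖L‖).of_nonneg_of_le
    (fun _ => norm_nonneg _) fun _ => L.le_opNorm _

namespace Matrix

variable {ι 𝕜 : Type*} [Fintype ι] [DecidableEq ι] [RCLike 𝕜]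

theorem inv_one_sub_eq_tsum_pow {s : Matrix ι ι 𝕜} (hs : ‖s‖ < 1) :
    (1 - s)⁻¹ = ∑' m, s ^ m :=
  (coe_units_inv (Units.oneSub s hs)).symm

def dotProductMulVecCLM (u v : ι → 𝕜) : Matrix ι ι 𝕜 →L[𝕜] 𝕜 :=
  LinearMap.toContinuousLinearMap
    { toFun := fun M => u ⬝ᵥ (M *ᵥ v)
      map_add' := fun M N => by simp only [add_mulVec, dotProduct_add]
      map_smul' := fun c M => by simp only [smul_mulVec, dotProduct_smul, RingHom.id_apply] }

theorem hasSum_dotProduct_pow_mulVec {s : Matrix ι ι 𝕜} (hs : ‖s‖ < 1) (u v : ι → 𝕜) :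
    HasSum (fun m => u ⬝ᵥ (s ^ m *ᵥ v)) (u ⬝ᵥ ((1 - s)⁻¹ *ᵥ v)) := by
  rw [inv_one_sub_eq_tsum_pow hs]
  exact (summable_geometric_of_norm_lt_one hs).hasSum.mapL (dotProductMulVecCLM u v)

theorem summable_norm_dotProduct_pow_mulVec {s : Matrix ι ι 𝕜} (hs : ‖s‖ < 1) (u v : ι → 𝕜) :
    Summable fun m => ‖u ⬝ᵥ (s ^ m *ᵥ v)‖ :=
  summable_norm_map_pow_of_norm_lt_one (dotProductMulVecCLM u v) hs

theorem linfty_opNorm_congr {m n α : Type*} [Fintype m] [Fintype n] [SeminormedAddCommGroup α]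
    {M N : Matrix m n α} (h : ∀ i j, ‖M i j‖ = ‖N i j‖) : ‖M‖ = ‖N‖ := by
  have h' : ∀ i j, ‖M i j‖₊ = ‖N i j‖₊ := fun i j => NNReal.eq (h i j)
  simp only [linfty_opNorm_def, h']

end Matrix

section PointInteractions

variable {n : ℕ} (y : Fin n → EuclideanSpace ℝ (Fin 3)) (α : Fin n → ℂ)

def planeWave (k : EuclideanSpace ℝ (Fin 3)) : Fin n → ℂ :=
  fun j => Complex.exp (Complex.I * (inner ℝ k (y j) : ℝ))

def diagShift (κ : ℝ) : ℂ := Complex.I * κ / (4 * Real.pi)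

theorem norm_diagShift (κ : ℝ) : ‖diagShift κ‖ = |κ| / (4 * Real.pi) := by
  simp [diagShift, abs_of_pos Real.pi_pos]

theorem A3_eq_W3_sub (κ : ℝ) : A3 n y α κ = W3 n y α κ - diagShift κ • 1 := by
  ext j j'
  by_cases h : j = j' <;> simp [A3, W3, diagShift, one_apply, h]

theorem norm_W3_eq_norm_W3_zero (κ : ℝ) : ‖W3 n y α κ‖ = ‖W3 n y α 0‖ := by
  refine linfty_opNorm_congr fun j j' => ?_
  by_cases h : j = j'
  · simp [W3, h]
  · simp [W3, h, Complex.norm_exp]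

theorem C3coef_eq_dotProduct (κ : ℝ) (m : ℕ) (k ℓ : EuclideanSpace ℝ (Fin 3)) :
    C3coef n y α κ m k ℓ = planeWave y (-ℓ) ⬝ᵥ (W3 n y α κ ^ m *ᵥ planeWave y k) := by
  simp only [C3coef, planeWave, dotProduct, mulVec, Finset.mul_sum]
  refine Finset.sum_congr rfl fun j _ => Finset.sum_congr rfl fun j' _ => ?_
  rw [mul_left_comm, ← Complex.exp_add, inner_neg_left]
  push_cast
  ring_nf

theorem f3_eq_dotProduct (κ : ℝ) (k ℓ : EuclideanSpace ℝ (Fin 3)) :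
    f3 n y α κ k ℓ =
      -((2 * Real.pi : ℂ) ^ 3)⁻¹ * planeWave y (-ℓ) ⬝ᵥ ((A3 n y α κ)⁻¹ *ᵥ planeWave y k) := by
  have hb : (fun j => -Complex.exp (Complex.I * (inner ℝ k (y j) : ℝ))) = -planeWave y k := rfl
  rw [f3, q3, hb, mulVec_neg, neg_mul, ← mul_neg, ← neg_dotProduct, dotProduct_comm]
  simp only [dotProduct, planeWave, inner_neg_left, Pi.neg_apply, ofReal_neg]
  ring_nf

theorem diagShift_ne_zero {κ : ℝ} (hκ : κ ≠ 0) : diagShift κ ≠ 0 := by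
  simp [diagShift, hκ, Real.pi_ne_zero]

theorem inv_diagShift (κ : ℝ) : (diagShift κ)⁻¹ = -4 * Real.pi * Complex.I / κ := by
  rw [diagShift, inv_div, div_mul_eq_div_div, div_I]
  ring

theorem A3_eq_smul_one_sub {κ : ℝ} (hσ : diagShift κ ≠ 0) :
    A3 n y α κ = (-diagShift κ) • (1 - (diagShift κ)⁻¹ • W3 n y α κ) := by
  rw [A3_eq_W3_sub, smul_sub, smul_smul, neg_mul, mul_inv_cancel₀ hσ, neg_one_smul, neg_smul,
    sub_neg_eq_add, sub_eq_neg_add]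

theorem norm_inv_diagShift_smul_W3_lt_one {κ : ℝ} (hκ : 4 * Real.pi * ‖W3 n y α 0‖ < κ) :
    ‖(diagShift κ)⁻¹ • W3 n y α κ‖ < 1 := by
  have hκ0 : 0 < κ := lt_of_le_of_lt (by positivity) hκ
  rw [norm_smul, norm_inv, norm_diagShift, abs_of_pos hκ0, norm_W3_eq_norm_W3_zero, inv_div,
    div_mul_eq_mul_div, div_lt_one hκ0]
  exact hκ

theorem inv_smul_inv_one_sub_mul_A3 {κ : ℝ} (hκ : 4 * Real.pi * ‖W3 n y α 0‖ < κ) :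
    ((-diagShift κ)⁻¹ • (1 - (diagShift κ)⁻¹ • W3 n y α κ)⁻¹) * A3 n y α κ = 1 := by
  have hσ : diagShift κ ≠ 0 := diagShift_ne_zero (lt_of_le_of_lt (by positivity) hκ).ne'
  have hdet : IsUnit (1 - (diagShift κ)⁻¹ • W3 n y α κ).det := (isUnit_iff_isUnit_det _).mp
    (Units.oneSub _ (norm_inv_diagShift_smul_W3_lt_one y α hκ)).isUnit
  rw [A3_eq_smul_one_sub y α hσ, smul_mul_smul_comm, inv_mul_cancel₀ (neg_ne_zero.2 hσ),
    one_smul, nonsing_inv_mul _ hdet]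

end PointInteractions

theorem stmt12_general (n : ℕ) (y : Fin n → EuclideanSpace ℝ (Fin 3)) (α : Fin n → ℂ) :
    ∃ κ₀ > (0 : ℝ), ∀ κ ≥ κ₀, IsUnit (A3 n y α κ) ∧
      ∀ k ℓ : EuclideanSpace ℝ (Fin 3), ‖k‖ = κ → ‖ℓ‖ = κ →
        Summable (fun m : ℕ =>
          ‖(-4 * (Real.pi : ℂ) * Complex.I) ^ m *
              C3coef n y α κ m k ℓ / (κ : ℂ) ^ (m + 1)‖) ∧
        f3 n y α κ k ℓ =
          -(Complex.I / (2 * (Real.pi : ℂ) ^ 2)) *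
            ∑' m : ℕ, (-4 * (Real.pi : ℂ) * Complex.I) ^ m *
              C3coef n y α κ m k ℓ / (κ : ℂ) ^ (m + 1) := by
  refine ⟨4 * Real.pi * ‖W3 n y α 0‖ + 1, by positivity, fun κ hκ => ?_⟩
  have hκW : 4 * Real.pi * ‖W3 n y α 0‖ < κ := by linarith
  have hκ0 : (κ : ℂ) ≠ 0 := ofReal_ne_zero.2 (lt_of_le_of_lt (by positivity) hκW).ne'
  set s := (diagShift κ)⁻¹ • W3 n y α κ
  have hs : ‖s‖ < 1 := norm_inv_diagShift_smul_W3_lt_one y α hκW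
  have hleft : (-diagShift κ)⁻¹ • (1 - s)⁻¹ * A3 n y α κ = 1 :=
    inv_smul_inv_one_sub_mul_A3 y α hκW
  refine ⟨(isUnit_iff_isUnit_det _).mpr (isUnit_det_of_left_inverse hleft), fun k ℓ _ _ => ?_⟩
  have hterm (m : ℕ) : (-4 * (Real.pi : ℂ) * Complex.I) ^ m * C3coef n y α κ m k ℓ /
      (κ : ℂ) ^ (m + 1) = (κ : ℂ)⁻¹ * (planeWave y (-ℓ) ⬝ᵥ (s ^ m *ᵥ planeWave y k)) := by
    rw [C3coef_eq_dotProduct, smul_pow, smul_mulVec, dotProduct_smul, smul_eq_mul, inv_diagShift,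
      div_pow]
    field_simp
    ring
  simp only [hterm, norm_mul]
  refine ⟨(summable_norm_dotProduct_pow_mulVec hs _ _).mul_left _, ?_⟩
  rw [((hasSum_dotProduct_pow_mulVec hs _ _).mul_left _).tsum_eq, f3_eq_dotProduct,
    inv_eq_left_inv hleft, smul_mulVec, dotProduct_smul, smul_eq_mul, inv_neg, inv_diagShift]
  field_simp
  ring

/-- Remark 3.2, case d = 3: convergence of the high-energy expansion. -/
theorem stmt12 (n : ℕ) (y : Fin n → EuclideanSpace ℝ (Fin 3)) (α : Fin n → ℂ)
    (hy : Function.Injective y) :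
    ∃ κ₀ > (0 : ℝ), ∀ κ ≥ κ₀, IsUnit (A3 n y α κ) ∧
      ∀ k ℓ : EuclideanSpace ℝ (Fin 3), ‖k‖ = κ → ‖ℓ‖ = κ →
        Summable (fun m : ℕ =>
          ‖(-4 * (Real.pi : ℂ) * Complex.I) ^ m *
              C3coef n y α κ m k ℓ / (κ : ℂ) ^ (m + 1)‖) ∧
        f3 n y α κ k ℓ =
          -(Complex.I / (2 * (Real.pi : ℂ) ^ 2)) *
            ∑' m : ℕ, (-4 * (Real.pi : ℂ) * Complex.I) ^ m *
              C3coef n y α κ m k ℓ / (κ : ℂ) ^ (m + 1) :=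
  stmt12_general n y α
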